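/- arXiv:2203.00563 — 3 statements merged into one kernel-verified Lean document; each statement's English description precedes it below -/
import Mathlib

section
/- Let H_σ, H_π be Hilbert spaces, V : H_π → H_σ a bounded operator with V V* = 1, P ∈ B(H_σ) an orthogonal projection of finite rank, and Q := V* P V. Then Q is an orthogonal projection of finite rank on H_π, and for any a ∈ B(H_π), b ∈ B(H_σ), ‖Q a − Q a Q‖ ≤ ‖P b − P b P‖ + 2‖b V − V a‖. -/
open Filter Topology

/-- A finite rank orthogonal projection on a Hilbert space. -/
def IsFinRankProj {H : Type*} [NormedAddCommGroup H] [InnerProductSpace ℂ H]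
    [CompleteSpace H] (P : H →L[ℂ] H) : Prop :=
  IsSelfAdjoint P ∧ P ∘L P = P ∧ FiniteDimensional ℂ (LinearMap.range (P : H →ₗ[ℂ] H))

/-!
Since `V V† = 1`, `Q = V† P V` is again an orthogonal projection and `V Q = P V`. Hence
`Q a - Q a Q = V† (P b - P b P) V + V† P (V a - b V) (1 - Q)`,
and as `V`, `V†`, `P` and `1 - Q` are contractions this gives the estimate even with the
constant `1` in place of `2`.
-/

open ContinuousLinearMap

theorem isFinRankProj_iff {H : Type*} [NormedAddCommGroup H] [InnerProductSpace ℂ H]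
    [CompleteSpace H] {P : H →L[ℂ] H} :
    IsFinRankProj P ↔
      IsStarProjection P ∧ FiniteDimensional ℂ (LinearMap.range (P : H →ₗ[ℂ] H)) :=
  ⟨fun ⟨hsa, hidem, hfin⟩ => ⟨⟨hidem, hsa⟩, hfin⟩, fun ⟨⟨hidem, hsa⟩, hfin⟩ => ⟨hsa, hidem, hfin⟩⟩

theorem LinearMap.finiteDimensional_range_comp_comp {K M₁ M₂ M₃ M₄ : Type*} [DivisionRing K]
    [AddCommGroup M₁] [AddCommGroup M₂] [AddCommGroup M₃] [AddCommGroup M₄]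
    [Module K M₁] [Module K M₂] [Module K M₃] [Module K M₄]
    (f : M₃ →ₗ[K] M₄) (g : M₂ →ₗ[K] M₃) (h : M₁ →ₗ[K] M₂) [FiniteDimensional K (range g)] :
    FiniteDimensional K (range (f ∘ₗ g ∘ₗ h)) := by
  rw [range_comp]
  have : FiniteDimensional K (range (g ∘ₗ h)) :=
    Submodule.finiteDimensional_of_le (range_comp_le_range h g)
  exact Module.Finite.map _ f

section Coisometry

variable {𝕜 E F : Type*} [RCLike 𝕜]
  [NormedAddCommGroup E] [InnerProductSpace 𝕜 E] [CompleteSpace E]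
  [NormedAddCommGroup F] [InnerProductSpace 𝕜 F] [CompleteSpace F]
  {V : E →L[𝕜] F}

namespace ContinuousLinearMap

theorem apply_adjoint_apply_of_comp_adjoint_eq_one (hV : V ∘L adjoint V = 1) (y : F) :
    V (adjoint V y) = y :=
  congr($hV y)

theorem norm_le_one_of_comp_adjoint_eq_one (hV : V ∘L adjoint V = 1) : ‖V‖ ≤ 1 := by
  have hsq : ‖V‖ * ‖V‖ ≤ 1 :=
    calc ‖V‖ * ‖V‖ = ‖adjoint V‖ * ‖adjoint V‖ := by rw [LinearIsometryEquiv.norm_map]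
      _ = ‖V ∘L adjoint V‖ := by rw [← norm_adjoint_comp_self, adjoint_adjoint]
      _ ≤ 1 := hV ▸ norm_id_le
  nlinarith [norm_nonneg V]

theorem norm_adjoint_le_one_of_comp_adjoint_eq_one (hV : V ∘L adjoint V = 1) :
    ‖adjoint V‖ ≤ 1 :=
  (LinearIsometryEquiv.norm_map _ V).trans_le (norm_le_one_of_comp_adjoint_eq_one hV)

end ContinuousLinearMap

theorem IsStarProjection.adjoint_conj_of_comp_adjoint_eq_one (hV : V ∘L adjoint V = 1)
    {P : F →L[𝕜] F} (hP : IsStarProjection P) : IsStarProjection (adjoint V ∘L P ∘L V) := by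
  refine ⟨?_, hP.isSelfAdjoint.adjoint_conj V⟩
  ext x
  have hPP : P (P (V x)) = P (V x) := congr($hP.isIdempotentElem.eq (V x))
  simp [apply_adjoint_apply_of_comp_adjoint_eq_one hV, hPP]

theorem norm_comp_sub_comp_comp_adjoint_conj_le (hV : V ∘L adjoint V = 1)
    {P : F →L[𝕜] F} (hP : IsStarProjection P) (a : E →L[𝕜] E) (b : F →L[𝕜] F) :
    ‖(adjoint V ∘L P ∘L V) ∘L a - (adjoint V ∘L P ∘L V) ∘L a ∘L (adjoint V ∘L P ∘L V)‖ ≤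
      ‖P ∘L b - P ∘L b ∘L P‖ + ‖b ∘L V - V ∘L a‖ := by
  set Q := adjoint V ∘L P ∘L V
  have hQ : IsStarProjection Q := hP.adjoint_conj_of_comp_adjoint_eq_one hV
  have hdecomp : Q ∘L a - Q ∘L a ∘L Q = adjoint V ∘L (P ∘L b - P ∘L b ∘L P) ∘L V +
      adjoint V ∘L P ∘L (V ∘L a - b ∘L V) ∘L (1 - Q) := by
    ext x
    simp only [Q, comp_apply, sub_apply, add_apply, one_def, coe_id', id_eq, map_sub,
      apply_adjoint_apply_of_comp_adjoint_eq_one hV]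
    abel
  have hV₁ := norm_le_one_of_comp_adjoint_eq_one hV
  have hV₁' := norm_adjoint_le_one_of_comp_adjoint_eq_one hV
  have hP₁ := hP.norm_le
  have hQ₁ := hQ.one_sub.norm_le
  rw [hdecomp, norm_sub_rev (b ∘L V)]
  refine (norm_add_le _ _).trans (add_le_add ?_ ?_)
  · calc _ ≤ ‖adjoint V‖ * (‖P ∘L b - P ∘L b ∘L P‖ * ‖V‖) := by
          grw [opNorm_comp_le, opNorm_comp_le]
      _ ≤ 1 * (‖P ∘L b - P ∘L b ∘L P‖ * 1) := by gcongr
      _ = _ := by ring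
  · calc _ ≤ ‖adjoint V‖ * (‖P‖ * (‖V ∘L a - b ∘L V‖ * ‖1 - Q‖)) := by
          grw [opNorm_comp_le, opNorm_comp_le, opNorm_comp_le]
      _ ≤ 1 * (1 * (‖V ∘L a - b ∘L V‖ * 1)) := by gcongr
      _ = _ := by ring

end Coisometry

theorem stmt3 {Hπ Hσ : Type*}
    [NormedAddCommGroup Hπ] [InnerProductSpace ℂ Hπ] [CompleteSpace Hπ]
    [NormedAddCommGroup Hσ] [InnerProductSpace ℂ Hσ] [CompleteSpace Hσ]
    (V : Hπ →L[ℂ] Hσ) (hV : V ∘L ContinuousLinearMap.adjoint V = 1)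
    (P : Hσ →L[ℂ] Hσ) (hP : IsFinRankProj P)
    (Q : Hπ →L[ℂ] Hπ) (hQ : Q = ContinuousLinearMap.adjoint V ∘L P ∘L V) :
    IsFinRankProj Q ∧
      ∀ (a : Hπ →L[ℂ] Hπ) (b : Hσ →L[ℂ] Hσ),
        ‖Q ∘L a - Q ∘L a ∘L Q‖ ≤ ‖P ∘L b - P ∘L b ∘L P‖ + 2 * ‖b ∘L V - V ∘L a‖ := by
  obtain ⟨hPproj, hPfin⟩ := isFinRankProj_iff.mp hP
  subst hQ
  refine ⟨isFinRankProj_iff.mpr ⟨hPproj.adjoint_conj_of_comp_adjoint_eq_one hV, ?_⟩,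
    fun a b => ?_⟩
  · rw [toLinearMap_comp, toLinearMap_comp]
    exact LinearMap.finiteDimensional_range_comp_comp _ _ _
  · have := norm_comp_sub_comp_comp_adjoint_conj_le hV hPproj a b
    linarith [norm_nonneg (b ∘L V - V ∘L a)]
end

section
/- Let H be a separable infinite dimensional Hilbert space and (P_n) an increasing sequence of finite rank orthogonal projections converging strongly to 1. Then for every T ∈ B(H), the distance of T to the compact operators satisfies dist(T, K(H)) = lim_n ‖(1 − P_n) T (1 − P_n)‖. -/
open Filter Topology

/-!
Write `Qₙ = 1 - Pₙ`. As `Pₙ` is compact, `T - Qₙ T Qₙ = Pₙ T + Qₙ T Pₙ` is compact, so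
`dist(T, K(H)) ≤ ‖Qₙ T Qₙ‖` for every `n`. Conversely, for a compact `K` and the contractions `Qₙ`,
`‖Qₙ T Qₙ‖ ≤ ‖T - K‖ + ‖Qₙ K‖`, and `‖Qₙ K‖ → 0`: an equicontinuous family converging pointwise
to `0` converges uniformly on the relatively compact set `K(ball)`.
-/

theorem isCompactOperator_of_finiteDimensional_range {𝕜 E F : Type*} [NontriviallyNormedField 𝕜]
    [ProperSpace 𝕜] [NormedAddCommGroup E] [NormedAddCommGroup F] [NormedSpace 𝕜 E]
    [NormedSpace 𝕜 F] (f : E →L[𝕜] F) [FiniteDimensional 𝕜 (LinearMap.range (f : E →ₗ[𝕜] F))] :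
    IsCompactOperator f := by
  set V := LinearMap.range (f : E →ₗ[𝕜] F)
  have := FiniteDimensional.proper 𝕜 V
  exact (isCompactOperator_of_locallyCompactSpace_dom
    (f.codRestrict V (LinearMap.mem_range_self _))).clm_comp V.subtypeL

theorem isCompactOperator_sub_compression {𝕜 E : Type*} [NontriviallyNormedField 𝕜]
    [NormedAddCommGroup E] [NormedSpace 𝕜 E] {P : E →L[𝕜] E} (hP : IsCompactOperator P)
    (T : E →L[𝕜] E) : IsCompactOperator ⇑(T - (1 - P) ∘L T ∘L (1 - P) : E →L[𝕜] E) := by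
  have hdecomp : T - (1 - P) ∘L T ∘L (1 - P) = P ∘L T + (1 - P) ∘L T ∘L P := by
    simp only [← ContinuousLinearMap.mul_def]
    noncomm_ring
  rw [hdecomp, FunLike.coe_add, ContinuousLinearMap.coe_comp, ContinuousLinearMap.coe_comp,
    ContinuousLinearMap.coe_comp]
  exact (hP.comp_clm T).add ((hP.clm_comp T).clm_comp (1 - P))

theorem infDist_compactOperators_le_norm_compression {𝕜 E : Type*} [NontriviallyNormedField 𝕜]
    [NormedAddCommGroup E] [NormedSpace 𝕜 E] {P : E →L[𝕜] E} (hP : IsCompactOperator P)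
    (T : E →L[𝕜] E) :
    Metric.infDist T {S : E →L[𝕜] E | IsCompactOperator ⇑S} ≤ ‖(1 - P) ∘L T ∘L (1 - P)‖ := by
  have hmem : T - (1 - P) ∘L T ∘L (1 - P) ∈ {S : E →L[𝕜] E | IsCompactOperator ⇑S} :=
    isCompactOperator_sub_compression hP T
  simpa only [dist_eq_norm, sub_sub_cancel] using Metric.infDist_le_dist_of_mem (x := T) hmem

theorem norm_mul_mul_self_le {R : Type*} [SeminormedRing R] {q : R} (hq : ‖q‖ ≤ 1) (t k : R) :
    ‖q * t * q‖ ≤ ‖t - k‖ + ‖q * k‖ :=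
  calc ‖q * t * q‖ = ‖q * (t - k) * q + q * k * q‖ := by noncomm_ring
    _ ≤ ‖q‖ * ‖t - k‖ * ‖q‖ + ‖q * k‖ * ‖q‖ :=
      norm_add_le_of_le (norm_mul₃_le ..) (norm_mul_le ..)
    _ ≤ 1 * ‖t - k‖ * 1 + ‖q * k‖ * 1 := by gcongr
    _ = ‖t - k‖ + ‖q * k‖ := by ring

theorem tendsto_norm_comp_of_isCompactOperator {𝕜 E F G ι : Type*} [RCLike 𝕜]
    [NormedAddCommGroup E] [NormedAddCommGroup F] [NormedAddCommGroup G]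
    [NormedSpace 𝕜 E] [NormedSpace 𝕜 F] [NormedSpace 𝕜 G]
    {l : Filter ι} {A : ι → F →L[𝕜] G} {C : ℝ} (hA : ∀ i, ‖A i‖ ≤ C)
    (hA0 : ∀ y, Tendsto (fun i => A i y) l (𝓝 0)) {K : E →L[𝕜] F} (hK : IsCompactOperator K) :
    Tendsto (fun i => ‖A i ∘L K‖) l (𝓝 0) := by
  have hequi : Equicontinuous ((↑) ∘ A) := by
    have := (NormedSpace.equicontinuous_TFAE A).out 1 5
    exact this.2 ⟨C, hA⟩
  have hunif : ∀ s, IsCompact s → TendstoUniformlyOn (fun i => ⇑(A i)) 0 l s := by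
    have := (EquicontinuousOn.tendsto_uniformOnFun_iff_pi (𝔖 := {s : Set F | IsCompact s})
      (fun _ hs => hs) (Set.sUnion_eq_univ_iff.2 fun y => ⟨{y}, isCompact_singleton, rfl⟩)
      (fun _ _ => hequi.equicontinuousOn _) l 0).2 (tendsto_pi_nhds.2 hA0)
    exact UniformOnFun.tendsto_iff_tendstoUniformlyOn.1 this
  rw [Metric.tendsto_nhds]
  intro ε hε
  filter_upwards [Metric.tendstoUniformlyOn_iff.1
    (hunif _ (hK.isCompact_closure_image_closedBall 1)) (ε / 2) (half_pos hε)] with i hi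
  have hle : ‖A i ∘L K‖ ≤ ε / 2 := by
    refine ContinuousLinearMap.opNorm_le_of_unit_norm (by positivity) fun x hx => ?_
    have := hi (K x) (subset_closure ⟨x, mem_closedBall_zero_iff.2 hx.le, rfl⟩)
    rw [Pi.zero_apply, dist_zero_left] at this
    exact this.le
  rw [Real.dist_0_eq_abs, abs_of_nonneg (norm_nonneg _)]
  linarith

section IsFinRankProj

variable {H : Type*} [NormedAddCommGroup H] [InnerProductSpace ℂ H] [CompleteSpace H]
  {P : H →L[ℂ] H}

theorem IsFinRankProj.isStarProjection (hP : IsFinRankProj P) : IsStarProjection P :=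
  ⟨hP.2.1, hP.1⟩

theorem IsFinRankProj.isCompactOperator (hP : IsFinRankProj P) : IsCompactOperator P :=
  have := hP.2.2
  isCompactOperator_of_finiteDimensional_range P

theorem IsFinRankProj.norm_one_sub_le (hP : IsFinRankProj P) : ‖1 - P‖ ≤ 1 :=
  hP.isStarProjection.one_sub.norm_le

end IsFinRankProj

theorem stmt5_general {H : Type*} [NormedAddCommGroup H] [InnerProductSpace ℂ H] [CompleteSpace H]
    (P : ℕ → H →L[ℂ] H) (hproj : ∀ n, IsFinRankProj (P n))
    (hsot : ∀ x : H, Tendsto (fun n => P n x) atTop (𝓝 x))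
    (T : H →L[ℂ] H) :
    Tendsto (fun n => ‖(1 - P n) ∘L T ∘L (1 - P n)‖) atTop
      (𝓝 (Metric.infDist T {S : H →L[ℂ] H | IsCompactOperator ⇑S})) := by
  refine tendsto_order.2 ⟨fun a ha => .of_forall fun n => ha.trans_le
    (infDist_compactOperators_le_norm_compression (hproj n).isCompactOperator T), fun b hb => ?_⟩
  obtain ⟨K, hK, hTK⟩ := (Metric.infDist_lt_iff ⟨0, isCompactOperator_zero⟩).1 hb
  rw [dist_eq_norm] at hTK
  have hQK : Tendsto (fun n => ‖(1 - P n) ∘L K‖) atTop (𝓝 0) :=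
    tendsto_norm_comp_of_isCompactOperator (fun n => (hproj n).norm_one_sub_le)
      (fun y => by simpa using (hsot y).const_sub y) hK
  filter_upwards [hQK.eventually (gt_mem_nhds (sub_pos.2 hTK))] with n hn
  have hupper : ‖(1 - P n) ∘L T ∘L (1 - P n)‖ ≤ ‖T - K‖ + ‖(1 - P n) ∘L K‖ := by
    have := norm_mul_mul_self_le (hproj n).norm_one_sub_le T K
    rw [mul_assoc] at this
    exact this
  linarith

theorem stmt5 {H : Type*} [NormedAddCommGroup H] [InnerProductSpace ℂ H] [CompleteSpace H]
    [TopologicalSpace.SeparableSpace H] (hinf : ¬ FiniteDimensional ℂ H)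
    (P : ℕ → H →L[ℂ] H) (hproj : ∀ n, IsFinRankProj (P n))
    (hmono : ∀ n, P (n + 1) ∘L P n = P n)
    (hsot : ∀ x : H, Tendsto (fun n => P n x) atTop (𝓝 x))
    (T : H →L[ℂ] H) :
    Tendsto (fun n => ‖(1 - P n) ∘L T ∘L (1 - P n)‖) atTop
      (𝓝 (Metric.infDist T {S : H →L[ℂ] H | IsCompactOperator ⇑S})) :=
  stmt5_general P hproj hsot T
end

section
/- Let U be the bilateral shift on ℓ²(ℤ), P the rank-one projection onto ℂe_0, and T = U + P. Then ‖T^n‖ ≥ √n for all n ≥ 1, while dist(T^n, K(ℓ²(ℤ))) = 1 for all n ≥ 1. Consequently, the quotient map onto the Calkin algebra is not bounded below on the algebra generated by T, and the closed algebra generated by T plus the compacts is not closed. -/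
/-!
`T ^ n e₀ = e₀ + ⋯ + eₙ` has norm `√(n + 1)`. Since `P` is compact, so is `T ^ n - U ^ n`, and
`U ^ n` is an isometry, so `T ^ n` is within `1` of the compact operators. Conversely `T ^ n` acts
as `U ^ n` on `eₘ` for `m ≤ -n`, while a compact operator sends `eₘ` to `0` as `m → -∞`; hence the
essential norm of `T ^ n` is exactly `1`.

Let `𝒜` be the closed algebra generated by `T`. For a polynomial `p`, the difference of consecutive
coordinates `⟪eₘ, p(T) e₀⟫ - ⟪eₘ₊₁, p(T) e₀⟫` is the coefficient `pₘ`, and `|pₘ|` is at most the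
distance from `p(T)` to any compact operator `K`, because `pₘ` is a matrix entry of `p(T)` far to
the left, where `K` is small. Both facts pass to the closure, so for a compact `K ∈ 𝒜` the
coordinates of `K e₀` are constant in `m ≥ 0` and vanish for `m < 0`, i.e. `K e₀ = 0`. If `𝒜 + 𝒦`
were closed, the open mapping theorem would split `U ^ n = A + K` with `A ∈ 𝒜`, `K` compact and
`‖A‖ ≤ C`; then `T ^ n - A` is a compact element of `𝒜`, so `A e₀ = T ^ n e₀` and
`√(n + 1) ≤ C` for every `n`.
-/

open Filter Topology Polynomial
open scoped InnerProductSpace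

section General

variable {𝕜 E F ι : Type*} [RCLike 𝕜]

theorem HilbertBasis.inner_eq_ite [DecidableEq ι] [NormedAddCommGroup E] [InnerProductSpace 𝕜 E]
    (b : HilbertBasis ι 𝕜 E) (i j : ι) : ⟪b i, b j⟫_𝕜 = if i = j then 1 else 0 :=
  orthonormal_iff_ite.mp b.orthonormal i j

theorem HilbertBasis.eq_zero_of_forall_inner_eq_zero [NormedAddCommGroup E]
    [InnerProductSpace 𝕜 E] (b : HilbertBasis ι 𝕜 E) {v : E} (hv : ∀ i, ⟪b i, v⟫_𝕜 = 0) :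
    v = 0 := by
  refine b.repr.map_eq_zero_iff.mp (lp.ext (funext fun i => ?_))
  simp [b.repr_apply_apply, hv]

theorem Orthonormal.tendsto_inner_cofinite [NormedAddCommGroup E] [InnerProductSpace 𝕜 E]
    {v : ι → E} (hv : Orthonormal 𝕜 v) (x : E) :
    Tendsto (fun i => ⟪v i, x⟫_𝕜) cofinite (𝓝 0) := by
  rw [tendsto_zero_iff_norm_tendsto_zero]
  have h := (hv.inner_products_summable (x := x)).tendsto_cofinite_zero.sqrt
  simpa only [Real.sqrt_sq (norm_nonneg _), Real.sqrt_zero] using h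

theorem IsCompactOperator.tendsto_apply_orthonormal [NormedAddCommGroup E]
    [InnerProductSpace 𝕜 E] [CompleteSpace E] [NormedAddCommGroup F] [InnerProductSpace 𝕜 F]
    [CompleteSpace F] {v : ι → E} (hv : Orthonormal 𝕜 v) {K : E →L[𝕜] F}
    (hK : IsCompactOperator K) : Tendsto (fun i => K (v i)) cofinite (𝓝 0) := by
  obtain ⟨S, hS, hKS⟩ := hK.image_closedBall_subset_compact 1
  refine hS.tendsto_nhds_of_unique_mapClusterPt
    (Eventually.of_forall fun i => hKS ⟨v i, by simp [hv.1 i], rfl⟩) fun y _ hy => ?_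
  refine ext_inner_right 𝕜 fun w => ?_
  have hlim : Tendsto (fun i => ⟪K (v i), w⟫_𝕜) cofinite (𝓝 0) := by
    simpa only [K.adjoint_inner_right] using hv.tendsto_inner_cofinite (K.adjoint w)
  have hcl : MapClusterPt ⟪y, w⟫_𝕜 cofinite (fun i => ⟪K (v i), w⟫_𝕜) :=
    hy.tendsto_comp ((continuous_id.inner continuous_const).tendsto y)
  rw [inner_zero_left]
  exact eq_of_nhds_neBot (hcl.clusterPt.mono hlim).neBot

theorem ContinuousLinearMap.le_opNorm_sub_of_tendsto [SeminormedAddCommGroup E]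
    [NormedSpace 𝕜 E] [SeminormedAddCommGroup F] [NormedSpace 𝕜 F] {l : Filter ι} [l.NeBot]
    {u : ι → E} {X K : E →L[𝕜] F} {c : ℝ} (hu : ∀ i, ‖u i‖ ≤ 1)
    (hK : Tendsto (fun i => K (u i)) l (𝓝 0)) (hX : ∀ᶠ i in l, c ≤ ‖X (u i)‖) :
    c ≤ ‖X - K‖ := by
  have hlim : Tendsto (fun i => ‖X - K‖ + ‖K (u i)‖) l (𝓝 (‖X - K‖ + 0)) :=
    tendsto_const_nhds.add (tendsto_zero_iff_norm_tendsto_zero.mp hK)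
  refine ge_of_tendsto (by simpa using hlim) (hX.mono fun i hi => ?_)
  calc c ≤ ‖X (u i)‖ := hi
    _ = ‖(X - K) (u i) + K (u i)‖ := by rw [sub_apply, sub_add_cancel]
    _ ≤ ‖X - K‖ + ‖K (u i)‖ :=
      (norm_add_le _ _).trans (add_le_add_left (by simpa using (X - K).le_opNorm_of_le (hu i)) _)

theorem ContinuousLinearMap.aeval_monomial_apply [NormedAddCommGroup E] [NormedSpace 𝕜 E]
    (T : E →L[𝕜] E) (n : ℕ) (c : 𝕜) (x : E) : aeval T (monomial n c) x = c • (T ^ n) x := by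
  rw [aeval_monomial, Algebra.algebraMap_eq_smul_one, smul_mul_assoc, one_mul, smul_apply]

theorem IsCompactOperator.pow_sub_pow [NormedAddCommGroup E] [NormedSpace 𝕜 E]
    {A B : E →L[𝕜] E} (h : IsCompactOperator (A - B)) (n : ℕ) :
    IsCompactOperator ⇑(A ^ n - B ^ n) := by
  induction n with
  | zero => simpa using isCompactOperator_zero
  | succ n ih =>
    have hsplit : A ^ (n + 1) - B ^ (n + 1) = A ∘L (A ^ n - B ^ n) + (A - B) ∘L B ^ n := by
      simp only [pow_succ', ContinuousLinearMap.comp_sub, ContinuousLinearMap.sub_comp,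
        ContinuousLinearMap.mul_def]
      abel
    rw [hsplit]
    exact (ih.clm_comp A).add (h.comp_clm _)

theorem ContinuousLinearMap.norm_pow_le_one_of_adjoint_comp_self [NormedAddCommGroup E]
    [InnerProductSpace 𝕜 E] [CompleteSpace E] {U : E →L[𝕜] E} (hU : U.adjoint ∘L U = 1)
    (n : ℕ) : ‖U ^ n‖ ≤ 1 := by
  have hlip : LipschitzWith 1 (U ^ n) := by
    simpa using (U.isometry_iff_adjoint_comp_self.mpr hU).lipschitz.iterate n
  exact_mod_cast (U ^ n).opNorm_le_of_lipschitz hlip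

theorem isCompactOperator_smulRight [NormedAddCommGroup E] [NormedSpace 𝕜 E]
    [NormedAddCommGroup F] [NormedSpace 𝕜 F] (φ : E →L[𝕜] 𝕜) (v : F) :
    IsCompactOperator (φ.smulRight v) :=
  (isCompactOperator_of_locallyCompactSpace_dom φ).continuous_comp
    (continuous_id.smul continuous_const)

theorem Submodule.exists_norm_le_of_isClosed_sup [NormedAddCommGroup E] [NormedSpace 𝕜 E]
    [CompleteSpace E] {A B : Submodule 𝕜 E} (hA : IsClosed (A : Set E))
    (hB : IsClosed (B : Set E)) (hAB : IsClosed ((A ⊔ B : Submodule 𝕜 E) : Set E)) :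
    ∃ C > 0, ∀ x ∈ A ⊔ B, ∃ a ∈ A, x - a ∈ B ∧ ‖a‖ ≤ C * ‖x‖ := by
  have := hA.completeSpace_coe
  have := hB.completeSpace_coe
  have := hAB.completeSpace_coe
  let Φ : A × B →L[𝕜] (A ⊔ B : Submodule 𝕜 E) := (A.subtypeL.coprod B.subtypeL).codRestrict _
    fun p => Submodule.add_mem_sup p.1.2 p.2.2
  have hΦ : Function.Surjective Φ := by
    rintro ⟨x, hx⟩
    obtain ⟨a, ha, c, hc, rfl⟩ := Submodule.mem_sup.mp hx
    exact ⟨(⟨a, ha⟩, ⟨c, hc⟩), rfl⟩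
  obtain ⟨C, hC, hΦC⟩ := Φ.exists_preimage_norm_le hΦ
  refine ⟨C, hC, fun x hx => ?_⟩
  obtain ⟨⟨a, c⟩, hac, hnorm⟩ := hΦC ⟨x, hx⟩
  have hx : x = a + c := (congrArg Subtype.val hac).symm
  exact ⟨a, a.2, by simp [hx, c.2], (norm_fst_le (a, c)).trans hnorm⟩

end General

section ShiftPlusProjection

variable {H : Type*} [NormedAddCommGroup H] [InnerProductSpace ℂ H] {b : HilbertBasis ℤ ℂ H}
  {T : H →L[ℂ] H}

variable (b) in
def IsShiftPlusProjection (T : H →L[ℂ] H) : Prop :=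
  ∀ m, T (b m) = b (m + 1) + if m = 0 then b 0 else 0

namespace IsShiftPlusProjection

theorem pow_apply_of_add_nonpos (hT : IsShiftPlusProjection b T) (n : ℕ) {m : ℤ}
    (hm : m + n ≤ 0) : (T ^ n) (b m) = b (m + n) := by
  induction n generalizing m with
  | zero => simp
  | succ n ih =>
    rw [pow_succ, mul_apply_eq_comp, hT m, if_neg (by omega), add_zero, ih (by omega)]
    push_cast
    ring_nf

theorem pow_apply_zero (hT : IsShiftPlusProjection b T) (n : ℕ) :
    (T ^ n) (b 0) = ∑ i ∈ Finset.range (n + 1), b i := by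
  induction n with
  | zero => simp
  | succ n ih =>
    rw [pow_succ', mul_apply_eq_comp, ih, map_sum, Finset.sum_range_succ' _ (n + 1)]
    simp [hT _, Finset.sum_add_distrib]

theorem norm_pow_apply_zero (hT : IsShiftPlusProjection b T) (n : ℕ) :
    ‖(T ^ n) (b 0)‖ = √(n + 1) := by
  have hsum : ⟪(T ^ n) (b 0), (T ^ n) (b 0)⟫_ℂ = n + 1 := by
    simpa [hT.pow_apply_zero] using
      (b.orthonormal.comp _ Nat.cast_injective).inner_sum (fun _ => (1 : ℂ)) (fun _ => 1)
        (Finset.range (n + 1))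
  rw [norm_eq_sqrt_re_inner (𝕜 := ℂ), hsum]
  norm_cast

theorem exists_lt_norm_pow_apply_zero (hT : IsShiftPlusProjection b T) (C : ℝ) :
    ∃ n : ℕ, C < ‖(T ^ n) (b 0)‖ := by
  obtain ⟨n, hn⟩ := exists_nat_gt (C ^ 2)
  refine ⟨n, (le_abs_self C).trans_lt ?_⟩
  rw [hT.norm_pow_apply_zero, Real.lt_sqrt (abs_nonneg C), sq_abs]
  linarith

theorem inner_pow_apply_zero_of_neg (hT : IsShiftPlusProjection b T) (n : ℕ) {m : ℤ}
    (hm : m < 0) : ⟪b m, (T ^ n) (b 0)⟫_ℂ = 0 := by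
  rw [hT.pow_apply_zero, inner_sum]
  exact Finset.sum_eq_zero fun i _ => by rw [b.inner_eq_ite, if_neg (by omega)]

theorem inner_pow_apply_zero_natCast (hT : IsShiftPlusProjection b T) (n m : ℕ) :
    ⟪b m, (T ^ n) (b 0)⟫_ℂ = if m ≤ n then 1 else 0 := by
  simp [hT.pow_apply_zero, b.inner_eq_ite]

theorem inner_aeval_apply_zero_of_neg (hT : IsShiftPlusProjection b T) (p : ℂ[X]) {m : ℤ}
    (hm : m < 0) : ⟪b m, aeval T p (b 0)⟫_ℂ = 0 := by
  induction p using Polynomial.induction_on' with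
  | add p q hp hq => simp [hp, hq]
  | monomial n c =>
    rw [T.aeval_monomial_apply, inner_smul_right, hT.inner_pow_apply_zero_of_neg n hm, mul_zero]

theorem inner_aeval_apply_zero_sub_inner_succ (hT : IsShiftPlusProjection b T) (p : ℂ[X])
    (m : ℕ) : ⟪b m, aeval T p (b 0)⟫_ℂ - ⟪b ↑(m + 1), aeval T p (b 0)⟫_ℂ = p.coeff m := by
  induction p using Polynomial.induction_on' with
  | add p q hp hq =>
    simp only [map_add, add_apply, inner_add_right, coeff_add, ← hp, ← hq]
    ring
  | monomial n c =>
    simp only [T.aeval_monomial_apply, coeff_monomial, inner_smul_right,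
      hT.inner_pow_apply_zero_natCast]
    split_ifs <;> first | omega | ring

theorem eventually_inner_aeval_apply (hT : IsShiftPlusProjection b T) (p : ℂ[X]) (k : ℕ) :
    ∀ᶠ i in atBot, ⟪b (i + k), aeval T p (b i)⟫_ℂ = p.coeff k := by
  induction p using Polynomial.induction_on' with
  | add p q hp hq =>
    filter_upwards [hp, hq] with i hpi hqi
    simp [hpi, hqi]
  | monomial n c =>
    filter_upwards [eventually_le_atBot (-n : ℤ)] with i hi
    simp only [T.aeval_monomial_apply, coeff_monomial, inner_smul_right,
      hT.pow_apply_of_add_nonpos n (by omega : i + n ≤ 0), b.inner_eq_ite]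
    split_ifs <;> first | omega | ring

variable [CompleteSpace H]

theorem one_le_opNorm_pow_sub (hT : IsShiftPlusProjection b T) (n : ℕ) {K : H →L[ℂ] H}
    (hK : IsCompactOperator K) : 1 ≤ ‖T ^ n - K‖ :=
  ContinuousLinearMap.le_opNorm_sub_of_tendsto (fun i => (b.orthonormal.1 i).le)
    ((hK.tendsto_apply_orthonormal b.orthonormal).mono_left (Int.cofinite_eq ▸ le_sup_left))
    ((eventually_le_atBot (-n : ℤ)).mono fun i hi => by
      rw [hT.pow_apply_of_add_nonpos n (by omega), b.orthonormal.1])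

theorem infDist_pow_setOf_isCompactOperator (hT : IsShiftPlusProjection b T) {U : H →L[ℂ] H}
    {n : ℕ} (hU : ‖U ^ n‖ ≤ 1) (hTU : IsCompactOperator ⇑(T ^ n - U ^ n)) :
    Metric.infDist (T ^ n) {K : H →L[ℂ] H | IsCompactOperator ⇑K} = 1 :=
  le_antisymm
    ((Metric.infDist_le_dist_of_mem (y := T ^ n - U ^ n) hTU).trans
      (by simpa [dist_eq_norm] using hU))
    ((Metric.le_infDist ⟨0, isCompactOperator_zero⟩).mpr fun K hK => by
      simpa [dist_eq_norm] using hT.one_le_opNorm_pow_sub n hK)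

theorem norm_coeff_le_opNorm_aeval_sub (hT : IsShiftPlusProjection b T) (p : ℂ[X]) (k : ℕ)
    {K : H →L[ℂ] H} (hK : IsCompactOperator K) : ‖p.coeff k‖ ≤ ‖aeval T p - K‖ := by
  refine ContinuousLinearMap.le_opNorm_sub_of_tendsto (fun i => (b.orthonormal.1 i).le)
    ((hK.tendsto_apply_orthonormal b.orthonormal).mono_left (Int.cofinite_eq ▸ le_sup_left))
    ((hT.eventually_inner_aeval_apply p k).mono fun i hi => ?_)
  rw [← hi]
  simpa [b.orthonormal.1] using norm_inner_le_norm (𝕜 := ℂ) (b (i + k)) (aeval T p (b i))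

theorem apply_zero_eq_zero_of_mem_topologicalClosure (hT : IsShiftPlusProjection b T)
    {K : H →L[ℂ] H} (hK : IsCompactOperator K)
    (hKT : K ∈ (Algebra.adjoin ℂ {T}).topologicalClosure) : K (b 0) = 0 := by
  rw [← SetLike.mem_coe, Subalgebra.topologicalClosure_coe,
    Algebra.adjoin_singleton_eq_range_aeval, AlgHom.coe_range] at hKT
  have hneg : ∀ m < 0, ⟪b m, K (b 0)⟫_ℂ = 0 := fun m hm =>
    closure_minimal (s := Set.range (aeval T)) (t := {X | ⟪b m, X (b 0)⟫_ℂ = 0})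
      (by rintro _ ⟨p, rfl⟩; exact hT.inner_aeval_apply_zero_of_neg p hm)
      (isClosed_eq (by fun_prop) continuous_const) hKT
  have hstep : ∀ m : ℕ, ⟪b ↑(m + 1), K (b 0)⟫_ℂ = ⟪b m, K (b 0)⟫_ℂ := fun m => by
    have h := closure_minimal
      (t := {X | ‖⟪b m, X (b 0)⟫_ℂ - ⟪b ↑(m + 1), X (b 0)⟫_ℂ‖ ≤ ‖X - K‖})
      (by
        rintro _ ⟨p, rfl⟩
        simpa only [Set.mem_ofPred_eq, hT.inner_aeval_apply_zero_sub_inner_succ] using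
          hT.norm_coeff_le_opNorm_aeval_sub p m hK)
      (isClosed_le (by fun_prop) (by fun_prop)) hKT
    rw [Set.mem_ofPred_eq, sub_self, norm_zero, norm_le_zero_iff, sub_eq_zero] at h
    exact h.symm
  have hconst : ∀ m : ℕ, ⟪b m, K (b 0)⟫_ℂ = ⟪b 0, K (b 0)⟫_ℂ := fun m => by
    induction m with
    | zero => rfl
    | succ m ih => rw [hstep, ih]
  have hzero : ⟪b 0, K (b 0)⟫_ℂ = 0 := by
    have h := (b.orthonormal.tendsto_inner_cofinite (K (b 0))).comp
      (tendsto_natCast_atTop_atTop.mono_right (Int.cofinite_eq ▸ le_sup_right))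
    simp only [Function.comp_def, hconst] at h
    exact tendsto_nhds_unique tendsto_const_nhds h
  refine b.eq_zero_of_forall_inner_eq_zero fun m => ?_
  rcases lt_or_ge m 0 with hm | hm
  · exact hneg m hm
  · lift m to ℕ using hm
    rw [hconst, hzero]

theorem not_isClosed_topologicalClosure_adjoin_add_compact (hT : IsShiftPlusProjection b T)
    {U : H →L[ℂ] H} (hU : ∀ n : ℕ, ‖U ^ n‖ ≤ 1)
    (hTU : ∀ n : ℕ, IsCompactOperator ⇑(T ^ n - U ^ n)) :
    ¬ IsClosed {X : H →L[ℂ] H | ∃ A ∈ (Algebra.adjoin ℂ {T}).topologicalClosure,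
      ∃ K : H →L[ℂ] H, IsCompactOperator K ∧ X = A + K} := by
  intro hclosed
  let 𝒜 := Subalgebra.toSubmodule (Algebra.adjoin ℂ {T}).topologicalClosure
  let 𝒦 := compactOperator (RingHom.id ℂ) H H
  have hsup : ((𝒜 ⊔ 𝒦 : Submodule ℂ (H →L[ℂ] H)) : Set (H →L[ℂ] H)) =
      {X | ∃ A ∈ (Algebra.adjoin ℂ {T}).topologicalClosure,
        ∃ K : H →L[ℂ] H, IsCompactOperator K ∧ X = A + K} := by
    ext X
    simp only [SetLike.mem_coe, Submodule.mem_sup, Set.mem_ofPred_eq]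
    exact exists_congr fun A => and_congr Iff.rfl
      (exists_congr fun K => and_congr Iff.rfl eq_comm)
  obtain ⟨C, hC0, hC⟩ := Submodule.exists_norm_le_of_isClosed_sup
    (Algebra.adjoin ℂ {T}).isClosed_topologicalClosure isClosed_setOfPred_isCompactOperator
    (hsup ▸ hclosed)
  obtain ⟨n, hn⟩ := hT.exists_lt_norm_pow_apply_zero C
  have hTn : T ^ n ∈ 𝒜 := pow_mem ((Algebra.adjoin ℂ {T}).le_topologicalClosure
    (Algebra.self_mem_adjoin_singleton ℂ T)) n
  obtain ⟨A, hA, hUA, hAC⟩ := hC (U ^ n) (by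
    simpa using Submodule.sub_mem_sup hTn (show T ^ n - U ^ n ∈ 𝒦 from hTU n))
  have hkernel : (T ^ n - A) (b 0) = 0 :=
    hT.apply_zero_eq_zero_of_mem_topologicalClosure (by simpa using (hTU n).add hUA)
      (sub_mem hTn hA)
  rw [sub_apply, sub_eq_zero] at hkernel
  refine hn.not_ge ?_
  calc ‖(T ^ n) (b 0)‖ = ‖A (b 0)‖ := by rw [hkernel]
    _ ≤ ‖A‖ := by simpa [b.orthonormal.1 0] using A.le_opNorm (b 0)
    _ ≤ C * ‖U ^ n‖ := hAC
    _ ≤ C := mul_le_of_le_one_right hC0.le (hU n)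

end IsShiftPlusProjection

end ShiftPlusProjection

theorem stmt16_general {H : Type*} [NormedAddCommGroup H] [InnerProductSpace ℂ H] [CompleteSpace H]
    (b : HilbertBasis ℤ ℂ H) (U : H →L[ℂ] H)
    (hU : ∀ n : ℤ, U (b n) = b (n + 1))
    (hU2 : ContinuousLinearMap.adjoint U ∘L U = 1)
    (P : H →L[ℂ] H) (hP : P = (innerSL ℂ (b 0)).smulRight (b 0))
    (T : H →L[ℂ] H) (hT : T = U + P) :
    (∀ n : ℕ, 1 ≤ n → Real.sqrt n ≤ ‖T ^ n‖) ∧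
    (∀ n : ℕ, 1 ≤ n →
      Metric.infDist (T ^ n) {K : H →L[ℂ] H | IsCompactOperator ⇑K} = 1) ∧
    (¬ ∃ c : ℝ, 0 < c ∧ ∀ x ∈ Algebra.adjoin ℂ ({T} : Set (H →L[ℂ] H)),
      c * ‖x‖ ≤ Metric.infDist x {K : H →L[ℂ] H | IsCompactOperator ⇑K}) ∧
    ¬ IsClosed {x : H →L[ℂ] H |
        ∃ a ∈ (Algebra.adjoin ℂ ({T} : Set (H →L[ℂ] H))).topologicalClosure,
        ∃ k : H →L[ℂ] H, IsCompactOperator ⇑k ∧ x = a + k} := by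
  have hshift : IsShiftPlusProjection b T := by
    intro m
    simp [hT, hP, hU, b.inner_eq_ite, eq_comm]
  have hTU : ∀ n : ℕ, IsCompactOperator ⇑(T ^ n - U ^ n) := IsCompactOperator.pow_sub_pow
    (by simpa [hT, hP] using isCompactOperator_smulRight (innerSL ℂ (b 0)) (b 0))
  have hUn := ContinuousLinearMap.norm_pow_le_one_of_adjoint_comp_self hU2
  have hbelow : ∀ n : ℕ, ‖(T ^ n) (b 0)‖ ≤ ‖T ^ n‖ := fun n => by
    simpa [b.orthonormal.1 0] using (T ^ n).le_opNorm (b 0)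
  have hess n := hshift.infDist_pow_setOf_isCompactOperator (hUn n) (hTU n)
  refine ⟨fun n _ => ?_, fun n _ => hess n, ?_,
    hshift.not_isClosed_topologicalClosure_adjoin_add_compact hUn hTU⟩
  · exact (Real.sqrt_le_sqrt (by linarith)).trans
      ((hshift.norm_pow_apply_zero n).ge.trans (hbelow n))
  · rintro ⟨c, hc, hbound⟩
    obtain ⟨n, hn⟩ := hshift.exists_lt_norm_pow_apply_zero c⁻¹
    have h := hbound (T ^ n) (pow_mem (Algebra.self_mem_adjoin_singleton ℂ T) n)
    rw [hess, ← le_inv_mul_iff₀ hc, mul_one] at h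
    exact hn.not_ge ((hbelow n).trans h)

theorem stmt16 {H : Type*} [NormedAddCommGroup H] [InnerProductSpace ℂ H] [CompleteSpace H]
    (b : HilbertBasis ℤ ℂ H) (U : H →L[ℂ] H)
    (hU : ∀ n : ℤ, U (b n) = b (n + 1))
    (hU1 : U ∘L ContinuousLinearMap.adjoint U = 1)
    (hU2 : ContinuousLinearMap.adjoint U ∘L U = 1)
    (P : H →L[ℂ] H) (hP : P = (innerSL ℂ (b 0)).smulRight (b 0))
    (T : H →L[ℂ] H) (hT : T = U + P) :
    (∀ n : ℕ, 1 ≤ n → Real.sqrt n ≤ ‖T ^ n‖) ∧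
    (∀ n : ℕ, 1 ≤ n →
      Metric.infDist (T ^ n) {K : H →L[ℂ] H | IsCompactOperator ⇑K} = 1) ∧
    (¬ ∃ c : ℝ, 0 < c ∧ ∀ x ∈ Algebra.adjoin ℂ ({T} : Set (H →L[ℂ] H)),
      c * ‖x‖ ≤ Metric.infDist x {K : H →L[ℂ] H | IsCompactOperator ⇑K}) ∧
    ¬ IsClosed {x : H →L[ℂ] H |
        ∃ a ∈ (Algebra.adjoin ℂ ({T} : Set (H →L[ℂ] H))).topologicalClosure,
        ∃ k : H →L[ℂ] H, IsCompactOperator ⇑k ∧ x = a + k} :=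
  stmt16_general b U hU hU2 P hP T hT
end
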